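/- For any admissible objective function Γ (similarity setting) and any δ ≥ 1, the robust pivot algorithm (Algorithm 7), run on a δ-adversarially-perturbed ground-truth input G, returns a cluster tree T with Γ(T) ≤ δ·min over cluster trees T' of Γ(T'), i.e., it is a δ-approximation. -/

import Mathlib

open scoped BigOperators

attribute [local instance] Classical.propDecidable

noncomputable section

/-! ### Cluster trees -/

/-- A (binary, rooted) hierarchical-clustering tree whose leaves are labelled by
vertices of `V`. -/
inductive ClusterTree (V : Type) : Type where
  | leaf : V → ClusterTree V
  | node : ClusterTree V → ClusterTree V → ClusterTree V

namespace ClusterTree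

variable {V : Type}

/-- The list of leaf labels of the tree (left-to-right). -/
def leavesList : ClusterTree V → List V
  | leaf v => [v]
  | node L R => leavesList L ++ leavesList R

/-- The set of leaf labels of the tree. -/
def leaves [DecidableEq V] (T : ClusterTree V) : Finset V :=
  T.leavesList.toFinset

end ClusterTree

section Defs

variable {V : Type}

/-- `T` is a cluster tree for the whole (finite) vertex set `V`: its leaves are
pairwise distinct and exhaust the vertices. -/
def IsClusterTree [DecidableEq V] [Fintype V] (T : ClusterTree V) : Prop :=
  T.leavesList.Nodup ∧ T.leaves = Finset.univ

/-- `IsSubtreeOf s T` : `s` occurs as a rooted subtree of `T`. -/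
def IsSubtreeOf : ClusterTree V → ClusterTree V → Prop
  | s, ClusterTree.leaf v => s = ClusterTree.leaf v
  | s, ClusterTree.node L R => s = ClusterTree.node L R ∨ IsSubtreeOf s L ∨ IsSubtreeOf s R

/-- The subtree of `T` rooted at the lowest common ancestor of the leaves `x` and `y`. -/
def lcaSubtree [DecidableEq V] : ClusterTree V → V → V → ClusterTree V
  | ClusterTree.leaf v, _, _ => ClusterTree.leaf v
  | ClusterTree.node L R, x, y =>
    if x ∈ L.leaves ∧ y ∈ L.leaves then lcaSubtree L x y
    else if x ∈ R.leaves ∧ y ∈ R.leaves then lcaSubtree R x y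
    else ClusterTree.node L R

/-- `w(A, B) = ∑_{a ∈ A, b ∈ B} w a b`. -/
def cutWeight (w : V → V → ℝ) (A B : Finset V) : ℝ := ∑ a ∈ A, ∑ b ∈ B, w a b

/-- `w(A) = ∑_{a, b ∈ A} w a b` (ordered pairs; each edge counted twice). -/
def innerWeight (w : V → V → ℝ) (A : Finset V) : ℝ := ∑ a ∈ A, ∑ b ∈ A, w a b

/-- `∑_{e ∈ E} w(e)`, for a symmetric weight function with zero diagonal. -/
def totalWeight [Fintype V] (w : V → V → ℝ) : ℝ := (∑ u : V, ∑ v : V, w u v) / 2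

/-- Cost of a cluster tree: each internal node `N` with children `N₁, N₂`
contributes `w(V(N₁), V(N₂)) · g(|V(N₁)|, |V(N₂)|)`. -/
def treeCost [DecidableEq V] (w : V → V → ℝ) (g : ℕ → ℕ → ℝ) : ClusterTree V → ℝ
  | ClusterTree.leaf _ => 0
  | ClusterTree.node L R =>
      cutWeight w L.leaves R.leaves * g L.leaves.card R.leaves.card
        + treeCost w g L + treeCost w g R

/-- Dasgupta's cost (= `treeCost` with `g (a, b) = a + b`). -/
def dasguptaCost [DecidableEq V] (w : V → V → ℝ) : ClusterTree V → ℝ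
  | ClusterTree.leaf _ => 0
  | ClusterTree.node L R =>
      ((L.leaves.card + R.leaves.card : ℕ) : ℝ) * cutWeight w L.leaves R.leaves
        + dasguptaCost w L + dasguptaCost w R

/-! ### Generating trees -/

/-- `T` is a generating tree for the similarity graph `w` : there is a nonnegative
weight function on the internal nodes, non-increasing from leaves towards the root,
realizing every edge weight at the corresponding LCA. -/
def IsGenerating [DecidableEq V] (w : V → V → ℝ) (T : ClusterTree V) : Prop :=
  ∃ W : ClusterTree V → ℝ,
    (∀ s, IsSubtreeOf s T → 0 ≤ W s) ∧
    (∀ L R, IsSubtreeOf (ClusterTree.node L R) T →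
      ∀ s, IsSubtreeOf s L ∨ IsSubtreeOf s R → W (ClusterTree.node L R) ≤ W s) ∧
    (∀ x y, x ∈ T.leaves → y ∈ T.leaves → x ≠ y → w x y = W (lcaSubtree T x y))

/-- Generating tree in the dissimilarity setting (weights non-decreasing from
leaves towards the root). -/
def IsGeneratingDissim [DecidableEq V] (w : V → V → ℝ) (T : ClusterTree V) : Prop :=
  ∃ W : ClusterTree V → ℝ,
    (∀ s, IsSubtreeOf s T → 0 ≤ W s) ∧
    (∀ L R, IsSubtreeOf (ClusterTree.node L R) T →
      ∀ s, IsSubtreeOf s L ∨ IsSubtreeOf s R → W s ≤ W (ClusterTree.node L R)) ∧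
    (∀ x y, x ∈ T.leaves → y ∈ T.leaves → x ≠ y → w x y = W (lcaSubtree T x y))

/-- Strictly generating tree (similarity setting). -/
def IsStrictlyGenerating [DecidableEq V] (w : V → V → ℝ) (T : ClusterTree V) : Prop :=
  ∃ W : ClusterTree V → ℝ,
    (∀ s, IsSubtreeOf s T → 0 ≤ W s) ∧
    (∀ L R, IsSubtreeOf (ClusterTree.node L R) T →
      ∀ s, IsSubtreeOf s L ∨ IsSubtreeOf s R → W (ClusterTree.node L R) < W s) ∧
    (∀ x y, x ∈ T.leaves → y ∈ T.leaves → x ≠ y → w x y = W (lcaSubtree T x y))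

/-- Strictly generating tree (dissimilarity setting). -/
def IsStrictlyGeneratingDissim [DecidableEq V] (w : V → V → ℝ) (T : ClusterTree V) : Prop :=
  ∃ W : ClusterTree V → ℝ,
    (∀ s, IsSubtreeOf s T → 0 ≤ W s) ∧
    (∀ L R, IsSubtreeOf (ClusterTree.node L R) T →
      ∀ s, IsSubtreeOf s L ∨ IsSubtreeOf s R → W s < W (ClusterTree.node L R)) ∧
    (∀ x y, x ∈ T.leaves → y ∈ T.leaves → x ≠ y → w x y = W (lcaSubtree T x y))

/-! ### Ultrametrics and ground-truth inputs -/

/-- `d` is an ultrametric on `V`. -/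
def IsUltrametric (d : V → V → ℝ) : Prop :=
  (∀ x, d x x = 0) ∧ (∀ x y, d x y = 0 → x = y) ∧ (∀ x y, d x y = d y x) ∧
  (∀ x y, 0 ≤ d x y) ∧ (∀ x y z, d x y ≤ max (d x z) (d y z))

/-- `w` is a similarity graph generated from an ultrametric via a
non-increasing nonnegative function `f`. -/
def GeneratedFromUltrametric (w : V → V → ℝ) : Prop :=
  ∃ (d : V → V → ℝ) (f : ℝ → ℝ),
    IsUltrametric d ∧
    (∀ a b : ℝ, 0 ≤ a → a ≤ b → f b ≤ f a) ∧
    (∀ a : ℝ, 0 ≤ a → 0 ≤ f a) ∧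
    (∀ x y : V, x ≠ y → w x y = f (d x y))

/-- `w` is a dissimilarity graph generated from an ultrametric via a
non-decreasing nonnegative function `f`. -/
def GeneratedFromUltrametricDissim (w : V → V → ℝ) : Prop :=
  ∃ (d : V → V → ℝ) (f : ℝ → ℝ),
    IsUltrametric d ∧
    (∀ a b : ℝ, 0 ≤ a → a ≤ b → f a ≤ f b) ∧
    (∀ a : ℝ, 0 ≤ a → 0 ≤ f a) ∧
    (∀ x y : V, x ≠ y → w x y = f (d x y))

/-- `w` is a similarity graph generated from a *minimal* ultrametric:
pairs with equal weights are at equal ultrametric distance. -/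
def GeneratedFromMinimalUltrametric (w : V → V → ℝ) : Prop :=
  ∃ (d : V → V → ℝ) (f : ℝ → ℝ),
    IsUltrametric d ∧
    (∀ a b : ℝ, 0 ≤ a → a ≤ b → f b ≤ f a) ∧
    (∀ a : ℝ, 0 ≤ a → 0 ≤ f a) ∧
    (∀ x y : V, x ≠ y → w x y = f (d x y)) ∧
    (∀ u v u' v' : V, u ≠ v → u' ≠ v' → f (d u v) = f (d u' v') → d u v = d u' v')

/-- Dissimilarity analogue of `GeneratedFromMinimalUltrametric`. -/
def GeneratedFromMinimalUltrametricDissim (w : V → V → ℝ) : Prop :=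
  ∃ (d : V → V → ℝ) (f : ℝ → ℝ),
    IsUltrametric d ∧
    (∀ a b : ℝ, 0 ≤ a → a ≤ b → f a ≤ f b) ∧
    (∀ a : ℝ, 0 ≤ a → 0 ≤ f a) ∧
    (∀ x y : V, x ≠ y → w x y = f (d x y)) ∧
    (∀ u v u' v' : V, u ≠ v → u' ≠ v' → f (d u v) = f (d u' v') → d u v = d u' v')

/-- `w` is a `δ`-adversarially-perturbed (similarity) ground-truth input. -/
def IsDeltaPerturbedGroundTruth (w : V → V → ℝ) (δ : ℝ) : Prop :=
  ∃ (d : V → V → ℝ) (f : ℝ → ℝ),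
    IsUltrametric d ∧
    (∀ a b : ℝ, 0 ≤ a → a ≤ b → f b ≤ f a) ∧
    (∀ a : ℝ, 0 ≤ a → 0 ≤ f a) ∧
    (∀ x y : V, x ≠ y → f (d x y) ≤ w x y ∧ w x y ≤ δ * f (d x y))

end Defs

/-- The unit-weight clique on `V`. -/
def cliqueW (V : Type) [DecidableEq V] : V → V → ℝ := fun x y => if x = y then 0 else 1

/-- Admissibility of a cost function (similarity setting): on every similarity graph
generated from a minimal ultrametric, a cluster tree minimizes the cost
iff it is a generating tree. -/
def Admissible (g : ℕ → ℕ → ℝ) : Prop :=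
  ∀ (V : Type) [Fintype V] [DecidableEq V] (w : V → V → ℝ),
    GeneratedFromMinimalUltrametric w →
    ∀ T : ClusterTree V, IsClusterTree T →
      ((∀ T' : ClusterTree V, IsClusterTree T' → treeCost w g T ≤ treeCost w g T')
        ↔ IsGenerating w T)

/-- Admissibility of a value function (dissimilarity setting): on every dissimilarity
graph generated from a minimal ultrametric, a cluster tree maximizes the value
iff it is a generating tree. -/
def AdmissibleDissim (g : ℕ → ℕ → ℝ) : Prop :=
  ∀ (V : Type) [Fintype V] [DecidableEq V] (w : V → V → ℝ),
    GeneratedFromMinimalUltrametricDissim w →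
    ∀ T : ClusterTree V, IsClusterTree T →
      ((∀ T' : ClusterTree V, IsClusterTree T' → treeCost w g T' ≤ treeCost w g T)
        ↔ IsGeneratingDissim w T)

/-! ### Agglomerative (linkage) algorithms, modelled as a nondeterministic relation -/

/-- The initial state of an agglomerative algorithm: all singleton trees. -/
def initState (V : Type) [Fintype V] : Multiset (ClusterTree V) :=
  Finset.univ.val.map ClusterTree.leaf

/-- One merge step of a generic linkage algorithm: merge two candidate trees whose
leaf-set distance `D` is best (w.r.t. `better a b` = "`a` is at least as good as `b`")
among all candidate pairs; any tie-breaking choice is allowed. -/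
inductive MergeStep {V : Type} [DecidableEq V] (D : Finset V → Finset V → ℝ)
    (better : ℝ → ℝ → Prop) :
    Multiset (ClusterTree V) → Multiset (ClusterTree V) → Prop where
  | step : ∀ (rest : Multiset (ClusterTree V)) (T1 T2 : ClusterTree V),
      (∀ (T1' T2' : ClusterTree V) (rest' : Multiset (ClusterTree V)),
          T1 ::ₘ T2 ::ₘ rest = T1' ::ₘ T2' ::ₘ rest' →
          better (D T1.leaves T2.leaves) (D T1'.leaves T2'.leaves)) →
      MergeStep D better (T1 ::ₘ T2 ::ₘ rest) (ClusterTree.node T1 T2 ::ₘ rest)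

/-- `T` is a possible output of the linkage algorithm with dissimilarity/similarity
measure `D` and preference `better`. -/
def IsLinkageOutput {V : Type} [Fintype V] [DecidableEq V]
    (D : Finset V → Finset V → ℝ) (better : ℝ → ℝ → Prop) (T : ClusterTree V) : Prop :=
  Relation.ReflTransGen (MergeStep D better) (initState V) {T}

/-- Average-linkage measure. -/
def avgDist {V : Type} (w : V → V → ℝ) (A B : Finset V) : ℝ :=
  cutWeight w A B / ((A.card : ℝ) * (B.card : ℝ))

/-- Single-linkage measure: `min_{x ∈ A, y ∈ B} w x y`. -/
def minLinkDist {V : Type} [DecidableEq V] (w : V → V → ℝ) (A B : Finset V) : ℝ :=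
  (((A ×ˢ B).image fun p => w p.1 p.2).min).untopD 0

/-- Complete-linkage measure: `max_{x ∈ A, y ∈ B} w x y`. -/
def maxLinkDist {V : Type} [DecidableEq V] (w : V → V → ℝ) (A B : Finset V) : ℝ :=
  (((A ×ˢ B).image fun p => w p.1 p.2).max).unbotD 0

/-! ### Cuts -/

section Cuts

variable {V : Type}

/-- `A ⊕ x` : add `x` to `A` if absent, remove it if present. -/
def symmDiffV [DecidableEq V] (A : Finset V) (x : V) : Finset V :=
  if x ∈ A then A.erase x else insert x A

/-- `(A, B)` is an `ε/|A ∪ B|`-locally-densest cut of the induced subgraph on `A ∪ B`. -/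
def IsLocallyDensestCut [DecidableEq V] (w : V → V → ℝ) (ε : ℝ) (A B : Finset V) : Prop :=
  ∀ x ∈ A ∪ B,
    cutWeight w (symmDiffV A x) (symmDiffV B x) /
        (((symmDiffV A x).card : ℝ) * ((symmDiffV B x).card : ℝ)) ≤
      (1 + ε / ((A ∪ B).card : ℝ)) *
        (cutWeight w A B / ((A.card : ℝ) * (B.card : ℝ)))

/-- Cluster trees obtained by recursively splitting along `ε/n`-locally-densest cuts. -/
def IsRecLocallyDensestCutTree [DecidableEq V] (w : V → V → ℝ) (ε : ℝ) :
    ClusterTree V → Prop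
  | ClusterTree.leaf _ => True
  | ClusterTree.node L R =>
      IsLocallyDensestCut w ε L.leaves R.leaves ∧
      IsRecLocallyDensestCutTree w ε L ∧ IsRecLocallyDensestCutTree w ε R

/-- Cluster trees obtained by recursively splitting along `φ`-approximate sparsest cuts. -/
def IsRecApproxSparsestCutTree [DecidableEq V] (w : V → V → ℝ) (φ : ℝ) :
    ClusterTree V → Prop
  | ClusterTree.leaf _ => True
  | ClusterTree.node L R =>
      (∀ S : Finset V, S ⊆ L.leaves ∪ R.leaves → S.Nonempty → S ⊂ L.leaves ∪ R.leaves →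
        cutWeight w L.leaves R.leaves / ((L.leaves.card : ℝ) * (R.leaves.card : ℝ)) ≤
          φ * (cutWeight w S ((L.leaves ∪ R.leaves) \ S) /
            ((S.card : ℝ) * (((L.leaves ∪ R.leaves) \ S).card : ℝ)))) ∧
      IsRecApproxSparsestCutTree w φ L ∧ IsRecApproxSparsestCutTree w φ R

/-- Cluster trees obtained by recursively splitting along exact sparsest cuts. -/
def IsRecSparsestCutTree [DecidableEq V] (w : V → V → ℝ) : ClusterTree V → Prop
  | ClusterTree.leaf _ => True
  | ClusterTree.node L R =>
      (∀ S : Finset V, S ⊆ L.leaves ∪ R.leaves → S.Nonempty → S ⊂ L.leaves ∪ R.leaves →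
        cutWeight w L.leaves R.leaves / ((L.leaves.card : ℝ) * (R.leaves.card : ℝ)) ≤
          cutWeight w S ((L.leaves ∪ R.leaves) \ S) /
            ((S.card : ℝ) * (((L.leaves ∪ R.leaves) \ S).card : ℝ))) ∧
      IsRecSparsestCutTree w L ∧ IsRecSparsestCutTree w R

/-- Cluster trees obtained by recursively splitting along exact densest cuts. -/
def IsRecDensestCutTree [DecidableEq V] (w : V → V → ℝ) : ClusterTree V → Prop
  | ClusterTree.leaf _ => True
  | ClusterTree.node L R =>
      (∀ S : Finset V, S ⊆ L.leaves ∪ R.leaves → S.Nonempty → S ⊂ L.leaves ∪ R.leaves →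
        cutWeight w S ((L.leaves ∪ R.leaves) \ S) /
            ((S.card : ℝ) * (((L.leaves ∪ R.leaves) \ S).card : ℝ)) ≤
          cutWeight w L.leaves R.leaves / ((L.leaves.card : ℝ) * (R.leaves.card : ℝ))) ∧
      IsRecDensestCutTree w L ∧ IsRecDensestCutTree w R

/-- Cluster trees produced by the bisection 2-Center algorithm (similarity setting). -/
def IsBisection2CenterTree [DecidableEq V] (w : V → V → ℝ) : ClusterTree V → Prop
  | ClusterTree.leaf _ => True
  | ClusterTree.node L R =>
      (∃ u ∈ L.leaves ∪ R.leaves, ∃ v ∈ L.leaves ∪ R.leaves, u ≠ v ∧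
        (∃ r : ℝ,
          (∀ x ∈ L.leaves ∪ R.leaves, r ≤ max (w x u) (w x v)) ∧
          (∀ u' ∈ L.leaves ∪ R.leaves, ∀ v' ∈ L.leaves ∪ R.leaves, u' ≠ v' →
            ∃ x ∈ L.leaves ∪ R.leaves, max (w x u') (w x v') ≤ r)) ∧
        L.leaves = (L.leaves ∪ R.leaves).filter fun x => w x v ≤ w x u) ∧
      IsBisection2CenterTree w L ∧ IsBisection2CenterTree w R

/-- Cluster trees produced by the bisection 2-Center algorithm (dissimilarity setting). -/
def IsBisection2CenterTreeDissim [DecidableEq V] (w : V → V → ℝ) : ClusterTree V → Prop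
  | ClusterTree.leaf _ => True
  | ClusterTree.node L R =>
      (∃ u ∈ L.leaves ∪ R.leaves, ∃ v ∈ L.leaves ∪ R.leaves, u ≠ v ∧
        (∃ r : ℝ,
          (∀ x ∈ L.leaves ∪ R.leaves, min (w x u) (w x v) ≤ r) ∧
          (∀ u' ∈ L.leaves ∪ R.leaves, ∀ v' ∈ L.leaves ∪ R.leaves, u' ≠ v' →
            ∃ x ∈ L.leaves ∪ R.leaves, r ≤ min (w x u') (w x v'))) ∧
        L.leaves = (L.leaves ∪ R.leaves).filter fun x => w x u ≤ w x v) ∧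
      IsBisection2CenterTreeDissim w L ∧ IsBisection2CenterTreeDissim w R

end Cuts

/-! ### Pivot algorithms -/

mutual
/-- Trees produced by the fast pivot algorithm (Algorithm 6 of CKMM):
pick a pivot `p`, split the other vertices into classes of equal similarity to `p`
(in strictly decreasing order of similarity), recurse, and attach along a spine. -/
inductive IsPivotTree {V : Type} [DecidableEq V] (w : V → V → ℝ) : ClusterTree V → Prop where
  | mk : ∀ (p : V) (T : ClusterTree V), PivotSpine w p T → IsPivotTree w T

/-- The spine of the pivot algorithm: `PivotSpine w p T` says that `T` is an iterated
union of the single-vertex tree on `p` with pivot trees of the similarity classes of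
`p`, attached in strictly decreasing order of similarity to `p`. -/
inductive PivotSpine {V : Type} [DecidableEq V] (w : V → V → ℝ) : V → ClusterTree V → Prop where
  | base : ∀ p : V, PivotSpine w p (ClusterTree.leaf p)
  | step : ∀ (p : V) (S T : ClusterTree V) (c : ℝ),
      PivotSpine w p S → IsPivotTree w T →
      (∀ v ∈ T.leaves, w p v = c) →
      (∀ u ∈ S.leaves, u ≠ p → c < w p u) →
      PivotSpine w p (ClusterTree.node S T)
end

mutual
/-- Trees produced by the robust pivot algorithm (Algorithm 7 of CKMM). -/
inductive IsRobustPivotTree {V : Type} [DecidableEq V] (w : V → V → ℝ) :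
    ClusterTree V → Prop where
  | mk : ∀ (p : V) (T : ClusterTree V), RobustPivotSpine w T.leaves p T →
      IsRobustPivotTree w T

/-- `RobustPivotSpine w U p T` : `T` is a prefix (a spine) of a run of the robust pivot
algorithm on the vertex set `U`, started at the pivot `p`.  At each step, `wi` is the
maximum weight of an edge in the cut `(Ṽ, U \ Ṽ)` (where `Ṽ` is the set of already
clustered vertices), and the next block is the least subset of `U \ Ṽ` closed under
adding any vertex having an edge of weight at least `wi` into the block or into `Ṽ`. -/
inductive RobustPivotSpine {V : Type} [DecidableEq V] (w : V → V → ℝ) :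
    Finset V → V → ClusterTree V → Prop where
  | base : ∀ (U : Finset V) (p : V), RobustPivotSpine w U p (ClusterTree.leaf p)
  | step : ∀ (U : Finset V) (p : V) (S T : ClusterTree V) (wi : ℝ),
      RobustPivotSpine w U p S →
      IsRobustPivotTree w T →
      (∃ p1 ∈ S.leaves, ∃ p2 ∈ U \ S.leaves, w p1 p2 = wi) →
      (∀ q1 ∈ S.leaves, ∀ q2 ∈ U \ S.leaves, w q1 q2 ≤ wi) →
      T.leaves ⊆ U \ S.leaves →
      (∀ u ∈ U \ S.leaves, (∃ v ∈ T.leaves ∪ S.leaves, wi ≤ w u v) → u ∈ T.leaves) →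
      (∀ C : Finset V, C ⊆ U \ S.leaves →
        (∀ u ∈ U \ S.leaves, (∃ v ∈ C ∪ S.leaves, wi ≤ w u v) → u ∈ C) →
        T.leaves ⊆ C) →
      RobustPivotSpine w U p (ClusterTree.node S T)
end

/-! ### Paths and caterpillars -/

/-- Attach the leaves from the list `l` one by one on top of `t` (a "spine"). -/
def spineTree {V : Type} : ClusterTree V → List V → ClusterTree V
  | t, [] => t
  | t, v :: vs => spineTree (ClusterTree.node t (ClusterTree.leaf v)) vs

/-- The unit-weight path on `n` vertices. -/
def pathW (n : ℕ) (i j : Fin n) : ℝ :=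
  if (i : ℕ) + 1 = (j : ℕ) ∨ (j : ℕ) + 1 = (i : ℕ) then 1 else 0

/-! ### Random graphs: hierarchical stochastic block model -/

/-- Index set for the potential edges of a graph on `Fin n`. -/
abbrev EdgeIdx (n : ℕ) := {p : Fin n × Fin n // p.1 < p.2}

/-- The (0/1) weight function of the random graph described by the edge
configuration `c`. -/
def configW {n : ℕ} (c : EdgeIdx n → Bool) (u v : Fin n) : ℝ :=
  if h : u < v then (if c ⟨(u, v), h⟩ then 1 else 0)
  else if h' : v < u then (if c ⟨(v, u), h'⟩ then 1 else 0)
  else 0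

/-- The probability of the edge configuration `c` when each edge `e` is present
independently with probability `q e`. -/
def configProb {n : ℕ} (q : Fin n → Fin n → ℝ) (c : EdgeIdx n → Bool) : ℝ :=
  ∏ e : EdgeIdx n, if c e then q e.val.1 e.val.2 else 1 - q e.val.1 e.val.2

/-- The expected cost `E[Γ(T) | ψ]` of a fixed cluster tree `T`, over the random
choice of the edges (with edge probabilities `q`). -/
def expectedCost {n : ℕ} (g : ℕ → ℕ → ℝ) (q : Fin n → Fin n → ℝ)
    (T : ClusterTree (Fin n)) : ℝ :=
  ∑ c : EdgeIdx n → Bool, configProb q c * treeCost (configW c) g T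

/-- The (fixed, size-independent) data of a hierarchical stochastic block model with
`k` bottom-level clusters: a generating tree `Ttil` with weights `Wtil` in `(0,1)`
(the graph `G̃ₖ` on `k` vertices generated from an ultrametric), and intra-cluster
probabilities `p i ∈ (0,1]` exceeding the weight of the parent of leaf `i`. -/
structure HSBM (k : ℕ) where
  Ttil : ClusterTree (Fin k)
  Wtil : ClusterTree (Fin k) → ℝ
  p : Fin k → ℝ
  ttil_isClusterTree : IsClusterTree Ttil
  wtil_pos : ∀ L R, IsSubtreeOf (ClusterTree.node L R) Ttil →
    0 < Wtil (ClusterTree.node L R)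
  wtil_lt_one : ∀ L R, IsSubtreeOf (ClusterTree.node L R) Ttil →
    Wtil (ClusterTree.node L R) < 1
  wtil_mono : ∀ L R, IsSubtreeOf (ClusterTree.node L R) Ttil →
    ∀ s, IsSubtreeOf s L ∨ IsSubtreeOf s R → Wtil (ClusterTree.node L R) ≤ Wtil s
  p_pos : ∀ i, 0 < p i
  p_le_one : ∀ i, p i ≤ 1
  p_gt_parent : ∀ L R, IsSubtreeOf (ClusterTree.node L R) Ttil →
    ∀ i : Fin k, L = ClusterTree.leaf i ∨ R = ClusterTree.leaf i →
      Wtil (ClusterTree.node L R) < p i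

/-- The edge probabilities of the HSBM `M` with sparsity `α`, given the assignment
`ψ` of vertices to bottom-level clusters.  These are also the edge weights of the
expected graph `Ḡ`. -/
def HSBM.edgeProb {k : ℕ} (M : HSBM k) (α : ℝ) {n : ℕ} (ψ : Fin n → Fin k) :
    Fin n → Fin n → ℝ := fun u v =>
  if ψ u = ψ v then α * M.p (ψ u)
  else α * M.Wtil (lcaSubtree M.Ttil (ψ u) (ψ v))

/-- The probability of the sample `ω = (ψ, c)` (labels and edges) of the HSBM `M`
with label proportions `f` and sparsity `α`. -/
def hsbmProb {k : ℕ} (M : HSBM k) (f : Fin k → ℝ) (α : ℝ) {n : ℕ}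
    (ω : (Fin n → Fin k) × (EdgeIdx n → Bool)) : ℝ :=
  (∏ v : Fin n, f (ω.1 v)) * configProb (M.edgeProb α ω.1) ω.2

/-- The common cost `κ(n)` of all cluster trees of the unit-weight clique on `n`
vertices (computed on the caterpillar tree). -/
def cliqueTreeCost (g : ℕ → ℕ → ℝ) (n : ℕ) : ℝ :=
  ∑ i ∈ Finset.range n, (i : ℝ) * g i 1

/-- The smoothness property: `max {g(n₁,n₂) : n₁+n₂ = n} = O(κ(n)/n²)`. -/
def SmoothCost (g : ℕ → ℕ → ℝ) : Prop :=
  ∃ C : ℝ, 0 < C ∧ ∀ n1 n2 : ℕ, 1 ≤ n1 → 1 ≤ n2 →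
    g n1 n2 * (((n1 + n2 : ℕ) : ℝ)) ^ 2 ≤ C * cliqueTreeCost g (n1 + n2)

end

noncomputable section CKMMAux

set_option linter.unusedSectionVars false

namespace CKMMAux
open ClusterTree

variable {V : Type}

/-- number of syntactic nodes -/
def tsize : ClusterTree V → ℕ
  | .leaf _ => 1
  | .node L R => tsize L + tsize R + 1

lemma one_le_tsize (t : ClusterTree V) : 1 ≤ tsize t := by
  cases t <;> simp [tsize]

section DecEq
variable [DecidableEq V]

lemma leaves_leaf (v : V) : (leaf v : ClusterTree V).leaves = {v} := rfl

lemma leaves_node (L R : ClusterTree V) :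
    (node L R).leaves = L.leaves ∪ R.leaves := by
  simp [ClusterTree.leaves, ClusterTree.leavesList]

lemma leaves_nonempty : ∀ T : ClusterTree V, T.leaves.Nonempty
  | leaf v => ⟨v, by simp [leaves_leaf]⟩
  | node L R => by
      rcases leaves_nonempty L with ⟨x, hx⟩
      exact ⟨x, by simp [leaves_node, Finset.mem_union, hx]⟩

lemma isSubtreeOf_refl : ∀ T : ClusterTree V, IsSubtreeOf T T
  | leaf v => by simp [IsSubtreeOf]
  | node L R => by simp [IsSubtreeOf]

lemma isSubtreeOf_node_left {s L R : ClusterTree V} (h : IsSubtreeOf s L) :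
    IsSubtreeOf s (node L R) := Or.inr (Or.inl h)

lemma isSubtreeOf_node_right {s L R : ClusterTree V} (h : IsSubtreeOf s R) :
    IsSubtreeOf s (node L R) := Or.inr (Or.inr h)

lemma leaves_subset_of_isSubtreeOf :
    ∀ {T s : ClusterTree V}, IsSubtreeOf s T → s.leaves ⊆ T.leaves := by
  intro T
  induction T with
  | leaf v => intro s h; rw [show s = leaf v from h]
  | node L R ihL ihR =>
      intro s h
      rcases h with h | h | h
      · rw [h]
      · exact (ihL h).trans (by rw [leaves_node]; exact Finset.subset_union_left)
      · exact (ihR h).trans (by rw [leaves_node]; exact Finset.subset_union_right)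

lemma nodup_node {L R : ClusterTree V} (h : (node L R).leavesList.Nodup) :
    L.leavesList.Nodup ∧ R.leavesList.Nodup ∧ ∀ x, x ∈ L.leaves → x ∉ R.leaves := by
  have h' := h
  rw [show (node L R).leavesList = L.leavesList ++ R.leavesList from rfl,
    List.nodup_append] at h'
  refine ⟨h'.1, h'.2.1, fun x hx hx' => ?_⟩
  exact h'.2.2 x (by simpa [ClusterTree.leaves] using hx) x (by simpa [ClusterTree.leaves] using hx') rfl

lemma nodup_of_isSubtreeOf :
    ∀ {T s : ClusterTree V}, IsSubtreeOf s T → T.leavesList.Nodup → s.leavesList.Nodup := by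
  intro T
  induction T with
  | leaf v => intro s h hnd; rw [show s = leaf v from h]; exact hnd
  | node L R ihL ihR =>
      intro s h hnd
      rcases h with h | h | h
      · rw [h]; exact hnd
      · exact ihL h (nodup_node hnd).1
      · exact ihR h (nodup_node hnd).2.1

lemma lca_isSubtreeOf (x y : V) :
    ∀ T : ClusterTree V, IsSubtreeOf (lcaSubtree T x y) T
  | leaf v => by simp [lcaSubtree, IsSubtreeOf]
  | node L R => by
      rw [lcaSubtree]
      by_cases h1 : x ∈ L.leaves ∧ y ∈ L.leaves
      · rw [if_pos h1]; exact isSubtreeOf_node_left (lca_isSubtreeOf x y L)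
      · rw [if_neg h1]
        by_cases h2 : x ∈ R.leaves ∧ y ∈ R.leaves
        · rw [if_pos h2]; exact isSubtreeOf_node_right (lca_isSubtreeOf x y R)
        · rw [if_neg h2]; exact Or.inl rfl

lemma lca_symm (x y : V) :
    ∀ T : ClusterTree V, lcaSubtree T x y = lcaSubtree T y x
  | leaf v => rfl
  | node L R => by
      rw [lcaSubtree, lcaSubtree]
      by_cases hxL : x ∈ L.leaves <;> by_cases hyL : y ∈ L.leaves <;>
        by_cases hxR : x ∈ R.leaves <;> by_cases hyR : y ∈ R.leaves <;>
        simp [hxL, hyL, hxR, hyR, lca_symm x y L, lca_symm x y R]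

lemma lca_split :
    ∀ T : ClusterTree V, T.leavesList.Nodup → ∀ {x y : V},
      x ∈ T.leaves → y ∈ T.leaves → x ≠ y →
      ∃ L R, lcaSubtree T x y = node L R ∧
        ((x ∈ L.leaves ∧ y ∈ R.leaves) ∨ (x ∈ R.leaves ∧ y ∈ L.leaves))
  | leaf v => by
      intro _ x y hx hy hxy
      rw [leaves_leaf] at hx hy
      exact absurd (by rw [Finset.mem_singleton.mp hx, Finset.mem_singleton.mp hy] : x = y) hxy
  | node L R => by
      intro hnd x y hx hy hxy
      obtain ⟨hndL, hndR, hdisj⟩ := nodup_node hnd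
      rw [leaves_node, Finset.mem_union] at hx hy
      rw [lcaSubtree]
      by_cases h1 : x ∈ L.leaves ∧ y ∈ L.leaves
      · rw [if_pos h1]; exact lca_split L hndL h1.1 h1.2 hxy
      · rw [if_neg h1]
        by_cases h2 : x ∈ R.leaves ∧ y ∈ R.leaves
        · rw [if_pos h2]; exact lca_split R hndR h2.1 h2.2 hxy
        · rw [if_neg h2]
          refine ⟨L, R, rfl, ?_⟩
          rcases hx with hx | hx
          · rcases hy with hy | hy
            · exact absurd ⟨hx, hy⟩ h1
            · exact Or.inl ⟨hx, hy⟩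
          · rcases hy with hy | hy
            · exact Or.inr ⟨hx, hy⟩
            · exact absurd ⟨hx, hy⟩ h2

/-! ### min-pair weight -/

def pairsOf (A : Finset V) : Finset (V × V) := (A ×ˢ A).filter fun p => p.1 ≠ p.2

lemma mem_pairsOf {A : Finset V} {p : V × V} :
    p ∈ pairsOf A ↔ p.1 ∈ A ∧ p.2 ∈ A ∧ p.1 ≠ p.2 := by
  simp [pairsOf, Finset.mem_filter, Finset.mem_product, and_assoc]

def WW (w : V → V → ℝ) (M : ℝ) (s : ClusterTree V) : ℝ :=
  if h : (pairsOf s.leaves).Nonempty then (pairsOf s.leaves).inf' h (fun p => w p.1 p.2) else M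

lemma WW_le {w : V → V → ℝ} {M : ℝ} {s : ClusterTree V} {x y : V}
    (hx : x ∈ s.leaves) (hy : y ∈ s.leaves) (hxy : x ≠ y) : WW w M s ≤ w x y := by
  have hmem : (x, y) ∈ pairsOf s.leaves := mem_pairsOf.mpr ⟨hx, hy, hxy⟩
  rw [WW, dif_pos ⟨_, hmem⟩]
  exact Finset.inf'_le _ hmem

lemma le_WW {w : V → V → ℝ} {M c : ℝ} {s : ClusterTree V}
    (h : ∀ x ∈ s.leaves, ∀ y ∈ s.leaves, x ≠ y → c ≤ w x y) (hM : c ≤ M) :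
    c ≤ WW w M s := by
  rw [WW]
  split
  · next hne =>
      refine Finset.le_inf' hne _ (fun p hp => ?_)
      obtain ⟨h1, h2, h3⟩ := mem_pairsOf.mp hp
      exact h _ h1 _ h2 h3
  · exact hM

lemma WW_node_le_M {w : V → V → ℝ} {M : ℝ} (hwM : ∀ x y : V, x ≠ y → w x y ≤ M)
    {L R : ClusterTree V} (hnd : (node L R).leavesList.Nodup) :
    WW w M (node L R) ≤ M := by
  obtain ⟨xl, hxl⟩ := leaves_nonempty L
  obtain ⟨xr, hxr⟩ := leaves_nonempty R
  have hne : xl ≠ xr := fun h => (nodup_node hnd).2.2 xl hxl (h ▸ hxr)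
  exact (WW_le (by rw [leaves_node]; exact Finset.mem_union_left _ hxl)
    (by rw [leaves_node]; exact Finset.mem_union_right _ hxr) hne).trans (hwM _ _ hne)

lemma WW_le_WW {w : V → V → ℝ} {M : ℝ} {s t : ClusterTree V} (hsub : s.leaves ⊆ t.leaves)
    (hM : WW w M t ≤ M) : WW w M t ≤ WW w M s := by
  conv_rhs => rw [WW]
  split
  · next hne =>
      refine Finset.le_inf' hne _ (fun p hp => ?_)
      obtain ⟨h1, h2, h3⟩ := mem_pairsOf.mp hp
      exact WW_le (hsub h1) (hsub h2) h3
  · next => exact hM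

/-! ### lca evaluation -/

lemma lca_eq_left {L R : ClusterTree V} {x y : V} (h : x ∈ L.leaves ∧ y ∈ L.leaves) :
    lcaSubtree (node L R) x y = lcaSubtree L x y := by rw [lcaSubtree, if_pos h]

lemma lca_eq_right {L R : ClusterTree V} {x y : V} (h1 : ¬(x ∈ L.leaves ∧ y ∈ L.leaves))
    (h2 : x ∈ R.leaves ∧ y ∈ R.leaves) :
    lcaSubtree (node L R) x y = lcaSubtree R x y := by rw [lcaSubtree, if_neg h1, if_pos h2]

lemma lca_eq_node {L R : ClusterTree V} {x y : V} (h1 : ¬(x ∈ L.leaves ∧ y ∈ L.leaves))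
    (h2 : ¬(x ∈ R.leaves ∧ y ∈ R.leaves)) :
    lcaSubtree (node L R) x y = node L R := by rw [lcaSubtree, if_neg h1, if_neg h2]

lemma WW_node_le_WW_lca {w : V → V → ℝ} {M : ℝ} (hwM : ∀ x y : V, x ≠ y → w x y ≤ M)
    {L R s : ClusterTree V} (hnd : (node L R).leavesList.Nodup)
    (hsub : s.leaves ⊆ (node L R).leaves) :
    WW w M (node L R) ≤ WW w M s :=
  WW_le_WW hsub (WW_node_le_M hwM hnd)

lemma key3 {w : V → V → ℝ} {M : ℝ} (hwM : ∀ x y : V, x ≠ y → w x y ≤ M) :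
    ∀ T : ClusterTree V, T.leavesList.Nodup → ∀ {x y z : V},
      x ∈ T.leaves → y ∈ T.leaves → z ∈ T.leaves → x ≠ y →
      min (WW w M (lcaSubtree T x z)) (WW w M (lcaSubtree T y z)) ≤ WW w M (lcaSubtree T x y)
  | leaf v => by
      intro _ x y z hx hy _ hxy
      rw [leaves_leaf] at hx hy
      exact absurd (by rw [Finset.mem_singleton.mp hx, Finset.mem_singleton.mp hy] : x = y) hxy
  | node L R => by
      intro hnd x y z hx hy hz hxy
      obtain ⟨hndL, hndR, hdisj⟩ := nodup_node hnd
      rw [leaves_node, Finset.mem_union] at hx hy hz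
      have subL : ∀ {s : ClusterTree V}, IsSubtreeOf s L → s.leaves ⊆ (node L R).leaves :=
        fun h => leaves_subset_of_isSubtreeOf (isSubtreeOf_node_left h)
      have subR : ∀ {s : ClusterTree V}, IsSubtreeOf s R → s.leaves ⊆ (node L R).leaves :=
        fun h => leaves_subset_of_isSubtreeOf (isSubtreeOf_node_right h)
      rcases hx with hx | hx <;> rcases hy with hy | hy <;> rcases hz with hz | hz
      · -- L L L
        rw [lca_eq_left ⟨hx, hz⟩, lca_eq_left ⟨hy, hz⟩, lca_eq_left ⟨hx, hy⟩]
        exact key3 hwM L hndL hx hy hz hxy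
      · -- L L R
        have hzL : z ∉ L.leaves := fun h => hdisj z h hz
        rw [lca_eq_node (fun h => hzL h.2) (fun h => hdisj x hx h.1),
          lca_eq_node (fun h => hzL h.2) (fun h => hdisj y hy h.1),
          lca_eq_left ⟨hx, hy⟩, min_self]
        exact WW_node_le_WW_lca hwM hnd ((leaves_subset_of_isSubtreeOf
          (lca_isSubtreeOf x y L)).trans (subL (isSubtreeOf_refl L)))
      · -- L R L
        rw [lca_eq_left ⟨hx, hz⟩, lca_eq_node (fun h => hdisj y h.1 hy) (fun h => hdisj z hz h.2),
          lca_eq_node (fun h => hdisj y h.2 hy) (fun h => hdisj x hx h.1)]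
        exact min_le_right _ _
      · -- L R R
        rw [lca_eq_node (fun h => hdisj z h.2 hz) (fun h => hdisj x hx h.1),
          lca_eq_right (fun h => hdisj y h.1 hy) ⟨hy, hz⟩,
          lca_eq_node (fun h => hdisj y h.2 hy) (fun h => hdisj x hx h.1)]
        exact min_le_left _ _
      · -- R L L
        rw [lca_eq_node (fun h => hdisj x h.1 hx) (fun h => hdisj z hz h.2),
          lca_eq_left ⟨hy, hz⟩,
          lca_eq_node (fun h => hdisj x h.1 hx) (fun h => hdisj y hy h.2)]
        exact min_le_left _ _
      · -- R L R
        rw [lca_eq_right (fun h => hdisj x h.1 hx) ⟨hx, hz⟩,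
          lca_eq_node (fun h => hdisj z h.2 hz) (fun h => hdisj y hy h.1),
          lca_eq_node (fun h => hdisj x h.1 hx) (fun h => hdisj y hy h.2)]
        exact min_le_right _ _
      · -- R R L
        rw [lca_eq_node (fun h => hdisj x h.1 hx) (fun h => hdisj z hz h.2),
          lca_eq_node (fun h => hdisj y h.1 hy) (fun h => hdisj z hz h.2),
          lca_eq_right (fun h => hdisj x h.1 hx) ⟨hx, hy⟩, min_self]
        exact WW_node_le_WW_lca hwM hnd ((leaves_subset_of_isSubtreeOf
          (lca_isSubtreeOf x y R)).trans (subR (isSubtreeOf_refl R)))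
      · -- R R R
        rw [lca_eq_right (fun h => hdisj x h.1 hx) ⟨hx, hz⟩,
          lca_eq_right (fun h => hdisj y h.1 hy) ⟨hy, hz⟩,
          lca_eq_right (fun h => hdisj x h.1 hx) ⟨hx, hy⟩]
        exact key3 hwM R hndR hx hy hz hxy

/-! ### cost lemmas -/

lemma treeCost_mono {w1 w2 : V → V → ℝ} {g : ℕ → ℕ → ℝ} (hg : ∀ a b, 0 ≤ g a b)
    (hle : ∀ x y : V, x ≠ y → w1 x y ≤ w2 x y) :
    ∀ T : ClusterTree V, T.leavesList.Nodup → treeCost w1 g T ≤ treeCost w2 g T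
  | leaf _ => fun _ => by simp [treeCost]
  | node L R => fun hnd => by
      obtain ⟨hndL, hndR, hdisj⟩ := nodup_node hnd
      have hcut : cutWeight w1 L.leaves R.leaves ≤ cutWeight w2 L.leaves R.leaves := by
        refine Finset.sum_le_sum fun a ha => Finset.sum_le_sum fun b hb => ?_
        exact hle a b (fun h => hdisj a ha (h ▸ hb))
      have h1 := treeCost_mono hg hle L hndL
      have h2 := treeCost_mono hg hle R hndR
      have h3 := mul_le_mul_of_nonneg_right hcut (hg L.leaves.card R.leaves.card)
      simp only [treeCost]
      linarith

lemma treeCost_smul (c : ℝ) (w : V → V → ℝ) (g : ℕ → ℕ → ℝ) :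
    ∀ T : ClusterTree V, treeCost (fun x y => c * w x y) g T = c * treeCost w g T
  | leaf _ => by simp [treeCost]
  | node L R => by
      have hcut : cutWeight (fun x y => c * w x y) L.leaves R.leaves
          = c * cutWeight w L.leaves R.leaves := by
        simp [cutWeight, Finset.mul_sum]
      simp only [treeCost, hcut, treeCost_smul c w g L, treeCost_smul c w g R]
      ring

/-! ### the main algorithmic lemma -/

def NodeGood (w : V → V → ℝ) (δ : ℝ) (T : ClusterTree V) : Prop :=
  ∀ L R : ClusterTree V, IsSubtreeOf (node L R) T →
    ∃ c : ℝ, (∀ x ∈ L.leaves, ∀ y ∈ R.leaves, w x y ≤ c) ∧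
      (∀ u ∈ L.leaves ∪ R.leaves, ∀ v ∈ L.leaves ∪ R.leaves, u ≠ v → c ≤ δ * w u v)

theorem main_aux (w : V → V → ℝ) (hsym : ∀ u v, w u v = w v u) (δ : ℝ) (hδ : 1 ≤ δ)
    (d : V → V → ℝ) (f : ℝ → ℝ) (hd : IsUltrametric d)
    (hf : ∀ a b : ℝ, 0 ≤ a → a ≤ b → f b ≤ f a) (hf0 : ∀ a : ℝ, 0 ≤ a → 0 ≤ f a)
    (hw : ∀ x y : V, x ≠ y → f (d x y) ≤ w x y ∧ w x y ≤ δ * f (d x y)) :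
    ∀ n : ℕ, ∀ T : ClusterTree V, tsize T ≤ n →
      ((∀ (U : Finset V) (p : V), RobustPivotSpine w U p T → T.leaves ⊆ U →
          p ∈ T.leaves ∧ ∃ m : ℝ,
            (∀ v ∈ T.leaves, ∀ u ∈ U, u ∉ T.leaves → w v u ≤ m) ∧
            (∀ u ∈ T.leaves, m ≤ δ * f (d p u)) ∧ NodeGood w δ T) ∧
        (IsRobustPivotTree w T → NodeGood w δ T)) := by
  obtain ⟨hd0, hdid, hdsymm, hdnn, hdtri⟩ := hd
  have hδ0 : (0:ℝ) < δ := lt_of_lt_of_le one_pos hδ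
  have hmaxf : ∀ (t : ℝ) (x y z : V), t ≤ δ * f (d x z) → t ≤ δ * f (d y z) →
      t ≤ δ * f (d x y) := by
    intro t x y z h1 h2
    rcases le_total (d x z) (d y z) with hc | hc
    · have hle : d x y ≤ d y z := le_trans (hdtri x y z) (by rw [max_eq_right hc])
      exact h2.trans (mul_le_mul_of_nonneg_left (hf _ _ (hdnn x y) hle) hδ0.le)
    · have hle : d x y ≤ d x z := le_trans (hdtri x y z) (by rw [max_eq_left hc])
      exact h1.trans (mul_le_mul_of_nonneg_left (hf _ _ (hdnn x y) hle) hδ0.le)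
  intro n
  induction n with
  | zero => intro T h; exact absurd (le_trans (one_le_tsize T) h) (by simp)
  | succ n ih =>
    intro T hsize
    have spinePart : ∀ (U : Finset V) (p : V), RobustPivotSpine w U p T → T.leaves ⊆ U →
        p ∈ T.leaves ∧ ∃ m : ℝ,
          (∀ v ∈ T.leaves, ∀ u ∈ U, u ∉ T.leaves → w v u ≤ m) ∧
          (∀ u ∈ T.leaves, m ≤ δ * f (d p u)) ∧ NodeGood w δ T := by
      intro U p hsp hsub
      cases hsp with
      | base =>
          refine ⟨by rw [leaves_leaf]; exact Finset.mem_singleton_self p, δ * f 0, ?_, ?_, ?_⟩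
          · intro v hv u hU hu
            rw [leaves_leaf, Finset.mem_singleton] at hv
            rw [leaves_leaf, Finset.mem_singleton] at hu
            subst hv
            have hvu : v ≠ u := fun h => hu h.symm
            exact ((hw v u hvu).2).trans
              (mul_le_mul_of_nonneg_left (hf 0 (d v u) le_rfl (hdnn v u)) hδ0.le)
          · intro u hu
            rw [leaves_leaf, Finset.mem_singleton] at hu
            subst hu
            rw [hd0]
          · intro L R hsubn
            simp [IsSubtreeOf] at hsubn
      | step U p S T2 wi hS hT2 hmaxex hmax hsubT hclosed hmin =>
          have h1T2 := one_le_tsize T2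
          have h1S := one_le_tsize S
          have hsizes : tsize S + tsize T2 + 1 ≤ n + 1 := by
            simpa [tsize] using hsize
          have hszS : tsize S ≤ n := by omega
          have hszT2 : tsize T2 ≤ n := by omega
          have hsubS : S.leaves ⊆ U := by
            refine Finset.Subset.trans ?_ hsub
            rw [leaves_node]; exact Finset.subset_union_left
          obtain ⟨hp, m, hmS, hmlow, hgoodS⟩ := (ih S hszS).1 U p hS hsubS
          have IH_T2 : NodeGood w δ T2 := (ih T2 hszT2).2 hT2
          obtain ⟨p1, hp1, p2, hp2, heq⟩ := hmaxex
          have hp2' := Finset.mem_sdiff.mp hp2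
          have F1 : wi ≤ m := heq ▸ hmS p1 hp1 p2 hp2'.1 hp2'.2
          -- the flooded block stays at controlled distance from the pivot
          set C : Finset V := (U \ S.leaves).filter (fun x => wi ≤ δ * f (d p x)) with hC
          have hTC : T2.leaves ⊆ C := by
            refine hmin C (Finset.filter_subset _ _) ?_
            intro u hu hex
            obtain ⟨v, hv, hwv⟩ := hex
            rw [hC, Finset.mem_filter]
            refine ⟨hu, ?_⟩
            rcases Finset.mem_union.mp hv with hvC | hvS
            · by_cases hvu : v = u
              · subst hvu; exact (Finset.mem_filter.mp hvC).2
              · have h1 : wi ≤ δ * f (d p v) := (Finset.mem_filter.mp hvC).2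
                have h2 : wi ≤ δ * f (d u v) :=
                  hwv.trans ((hw u v (fun h => hvu h.symm)).2)
                exact hmaxf wi p u v h1 h2
            · have h1 : wi ≤ δ * f (d p v) := le_trans F1 (hmlow v hvS)
              have hvu : v ≠ u := fun h => (Finset.mem_sdiff.mp hu).2 (h ▸ hvS)
              have h2 : wi ≤ δ * f (d u v) :=
                hwv.trans ((hw u v (fun h => hvu h.symm)).2)
              exact hmaxf wi p u v h1 h2
          have F3 : ∀ u ∈ (node S T2).leaves, wi ≤ δ * f (d p u) := by
            intro u hu
            rw [leaves_node, Finset.mem_union] at hu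
            rcases hu with hu | hu
            · exact F1.trans (hmlow u hu)
            · exact (Finset.mem_filter.mp (hTC hu)).2
          have F4 : ∀ u ∈ (node S T2).leaves, ∀ v ∈ (node S T2).leaves, u ≠ v →
              wi ≤ δ * w u v := by
            intro u hu v hv huv
            have h1 : wi ≤ δ * f (d u p) := by rw [hdsymm]; exact F3 u hu
            have h2 : wi ≤ δ * f (d v p) := by rw [hdsymm]; exact F3 v hv
            exact (hmaxf wi u v p h1 h2).trans
              (mul_le_mul_of_nonneg_left (hw u v huv).1 hδ0.le)
          refine ⟨by rw [leaves_node]; exact Finset.mem_union_left _ hp, wi, ?_, F3, ?_⟩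
          · -- new cut bound
            intro v hv u hU hu
            have huS : u ∈ U \ S.leaves := Finset.mem_sdiff.mpr
              ⟨hU, fun h => hu (by rw [leaves_node]; exact Finset.mem_union_left _ h)⟩
            by_contra hlt
            push_neg at hlt
            have hv' : v ∈ T2.leaves ∪ S.leaves := by
              rw [leaves_node, Finset.mem_union] at hv
              rcases hv with hv | hv
              · exact Finset.mem_union_right _ hv
              · exact Finset.mem_union_left _ hv
            have : u ∈ T2.leaves := hclosed u huS ⟨v, hv', by rw [hsym]; exact hlt.le⟩
            exact hu (by rw [leaves_node]; exact Finset.mem_union_right _ this)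
          · -- NodeGood (node S T2)
            intro L R hsubn
            rcases hsubn with heqn | h | h
            · injection heqn with hL hR
              subst hL; subst hR
              refine ⟨wi, ?_, ?_⟩
              · intro x hx y hy
                exact hmax x hx y (hsubT hy)
              · intro u hu v hv huv
                rw [← leaves_node] at hu hv
                exact F4 u hu v hv huv
            · exact hgoodS L R h
            · exact IH_T2 L R h
    refine ⟨spinePart, fun hrob => ?_⟩
    obtain ⟨p, Tb, hsp2⟩ := hrob
    obtain ⟨_, m, _, _, hgood⟩ := spinePart _ p hsp2 (Finset.Subset.refl _)
    exact hgood

/-! ### the reconstructed ground-truth graph -/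

def What (w : V → V → ℝ) (M : ℝ) (T : ClusterTree V) : V → V → ℝ :=
  fun x y => if x = y then 0 else WW w M (lcaSubtree T x y)

lemma What_ne {w : V → V → ℝ} {M : ℝ} {T : ClusterTree V} {x y : V} (h : x ≠ y) :
    What w M T x y = WW w M (lcaSubtree T x y) := if_neg h

def dhat (w : V → V → ℝ) (M : ℝ) (T : ClusterTree V) : V → V → ℝ :=
  fun x y => if x = y then 0 else M + 1 - What w M T x y

def fhat (M : ℝ) : ℝ → ℝ := fun t => max (M + 1 - t) 0

lemma dhat_ne {w : V → V → ℝ} {M : ℝ} {T : ClusterTree V} {x y : V} (h : x ≠ y) :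
    dhat w M T x y = M + 1 - What w M T x y := if_neg h

lemma dhat_self {w : V → V → ℝ} {M : ℝ} {T : ClusterTree V} (x : V) :
    dhat w M T x x = 0 := if_pos rfl

lemma fhat_def (M t : ℝ) : fhat M t = max (M + 1 - t) 0 := rfl

end DecEq

end CKMMAux

end CKMMAux

/-- Theorem 12, CKMM: the robust pivot algorithm (Algorithm 7) is a
`δ`-approximation on `δ`-adversarially-perturbed ground-truth inputs, for every
admissible objective function. -/
theorem statement16 {V : Type} [Fintype V] [DecidableEq V] (w : V → V → ℝ)
    (hsym : ∀ u v, w u v = w v u)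
    (δ : ℝ) (hδ : 1 ≤ δ)
    (hpert : IsDeltaPerturbedGroundTruth w δ)
    (g : ℕ → ℕ → ℝ) (hg : ∀ a b : ℕ, 0 ≤ g a b) (hadm : Admissible g)
    (T : ClusterTree V) (hT : IsClusterTree T) (halg : IsRobustPivotTree w T) :
    ∀ T' : ClusterTree V, IsClusterTree T' →
      treeCost w g T ≤ δ * treeCost w g T' := by
  intro T' hT'
  obtain ⟨d, f, hd, hf, hf0, hw⟩ := hpert
  obtain ⟨hd0, hdid, hdsymm, hdnn, hdtri⟩ := id hd
  have hδ0 : (0:ℝ) < δ := lt_of_lt_of_le one_pos hδ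
  set M : ℝ := δ * f 0 with hMdef
  have hM0 : 0 ≤ M := mul_nonneg hδ0.le (hf0 0 le_rfl)
  have hwnn : ∀ x y : V, x ≠ y → 0 ≤ w x y :=
    fun x y hxy => (hf0 _ (hdnn x y)).trans (hw x y hxy).1
  have hwM : ∀ x y : V, x ≠ y → w x y ≤ M := fun x y hxy =>
    (hw x y hxy).2.trans (mul_le_mul_of_nonneg_left (hf 0 _ le_rfl (hdnn x y)) hδ0.le)
  have hndT : T.leavesList.Nodup := hT.1
  have hmemT : ∀ x : V, x ∈ T.leaves := fun x => by rw [hT.2]; exact Finset.mem_univ x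
  have hNG : CKMMAux.NodeGood w δ T :=
    (CKMMAux.main_aux w hsym δ hδ d f hd hf hf0 hw (CKMMAux.tsize T) T le_rfl).2 halg
  set Wh : V → V → ℝ := CKMMAux.What w M T with hWhdef
  -- pointwise sandwich
  have hlow : ∀ x y : V, x ≠ y → Wh x y ≤ w x y := by
    intro x y hxy
    obtain ⟨L, R, hlca, hsplit⟩ := CKMMAux.lca_split T hndT (hmemT x) (hmemT y) hxy
    rw [hWhdef, CKMMAux.What_ne hxy, hlca]
    have hx : x ∈ (ClusterTree.node L R).leaves := by
      rw [CKMMAux.leaves_node, Finset.mem_union]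
      rcases hsplit with ⟨h1, _⟩ | ⟨h1, _⟩
      · exact Or.inl h1
      · exact Or.inr h1
    have hy : y ∈ (ClusterTree.node L R).leaves := by
      rw [CKMMAux.leaves_node, Finset.mem_union]
      rcases hsplit with ⟨_, h2⟩ | ⟨_, h2⟩
      · exact Or.inr h2
      · exact Or.inl h2
    exact CKMMAux.WW_le hx hy hxy
  have hup : ∀ x y : V, x ≠ y → w x y ≤ δ * Wh x y := by
    intro x y hxy
    obtain ⟨L, R, hlca, hsplit⟩ := CKMMAux.lca_split T hndT (hmemT x) (hmemT y) hxy
    have hsubn : IsSubtreeOf (ClusterTree.node L R) T := hlca ▸ CKMMAux.lca_isSubtreeOf x y T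
    obtain ⟨c, hcross, hpairs⟩ := hNG L R hsubn
    have hxyc : w x y ≤ c := by
      rcases hsplit with ⟨h1, h2⟩ | ⟨h1, h2⟩
      · exact hcross x h1 y h2
      · rw [hsym]; exact hcross y h2 x h1
    have hWlow : w x y / δ ≤ CKMMAux.WW w M (ClusterTree.node L R) := by
      refine CKMMAux.le_WW ?_ ?_
      · intro u hu v hv huv
        rw [CKMMAux.leaves_node] at hu hv
        have := hpairs u hu v hv huv
        rw [div_le_iff₀ hδ0]
        nlinarith
      · rw [div_le_iff₀ hδ0]
        nlinarith [hwM x y hxy, hM0, hδ]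
    rw [hWhdef, CKMMAux.What_ne hxy, hlca]
    calc w x y = δ * (w x y / δ) := by field_simp
    _ ≤ δ * CKMMAux.WW w M (ClusterTree.node L R) :=
        mul_le_mul_of_nonneg_left hWlow hδ0.le
  -- Wh bounds
  have hWh0 : ∀ s : ClusterTree V, 0 ≤ CKMMAux.WW w M s :=
    fun s => CKMMAux.le_WW (fun x _ y _ hxy => hwnn x y hxy) hM0
  have hWhM : ∀ x y : V, x ≠ y → Wh x y ≤ M :=
    fun x y hxy => (hlow x y hxy).trans (hwM x y hxy)
  have hWhnn : ∀ x y : V, x ≠ y → 0 ≤ Wh x y := by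
    intro x y hxy; rw [hWhdef, CKMMAux.What_ne hxy]; exact hWh0 _
  have hWhsymm : ∀ x y : V, Wh x y = Wh y x := by
    intro x y
    by_cases hxy : x = y
    · rw [hxy]
    · rw [hWhdef, CKMMAux.What_ne hxy, CKMMAux.What_ne (Ne.symm hxy),
        CKMMAux.lca_symm x y T]
  -- Wh is generated from a minimal ultrametric
  have hfhat : ∀ x y : V, x ≠ y → CKMMAux.fhat M (CKMMAux.dhat w M T x y) = Wh x y := by
    intro x y hxy
    have h0 := hWhnn x y hxy
    rw [CKMMAux.dhat_ne hxy, CKMMAux.fhat_def, ← hWhdef]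
    have he : M + 1 - (M + 1 - Wh x y) = Wh x y := by ring
    rw [he, max_eq_left h0]
  have hdhat_pos : ∀ x y : V, x ≠ y → 1 ≤ CKMMAux.dhat w M T x y := by
    intro x y hxy
    rw [CKMMAux.dhat_ne hxy, ← hWhdef]
    have := hWhM x y hxy
    linarith
  have hGF : GeneratedFromMinimalUltrametric Wh := by
    refine ⟨CKMMAux.dhat w M T, CKMMAux.fhat M, ⟨?_, ?_, ?_, ?_, ?_⟩, ?_, ?_, ?_, ?_⟩
    · intro x; exact CKMMAux.dhat_self x
    · intro x y h
      by_contra hxy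
      have := hdhat_pos x y hxy
      rw [h] at this
      linarith
    · intro x y
      by_cases hxy : x = y
      · rw [hxy]
      · rw [CKMMAux.dhat_ne hxy, CKMMAux.dhat_ne (Ne.symm hxy), ← hWhdef, hWhsymm]
    · intro x y
      by_cases hxy : x = y
      · rw [hxy, CKMMAux.dhat_self]
      · linarith [hdhat_pos x y hxy]
    · intro x y z
      have hnn : ∀ a b : V, 0 ≤ CKMMAux.dhat w M T a b := by
        intro a b
        by_cases h : a = b
        · rw [h, CKMMAux.dhat_self]
        · linarith [hdhat_pos a b h]
      have hdsym2 : ∀ a b : V, CKMMAux.dhat w M T a b = CKMMAux.dhat w M T b a := by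
        intro a b
        by_cases hab : a = b
        · rw [hab]
        · rw [CKMMAux.dhat_ne hab, CKMMAux.dhat_ne (Ne.symm hab), ← hWhdef, hWhsymm]
      by_cases hxy : x = y
      · rw [hxy, CKMMAux.dhat_self]
        exact le_max_of_le_left (hnn y z)
      by_cases hxz : x = z
      · refine le_max_of_le_right ?_
        rw [← hxz, hdsym2 y x]
      by_cases hyz : y = z
      · refine le_max_of_le_left ?_
        rw [← hyz]
      · have h3 := CKMMAux.key3 hwM T hndT (hmemT x) (hmemT y) (hmemT z) hxy
        rw [CKMMAux.dhat_ne hxy, CKMMAux.dhat_ne hxz, CKMMAux.dhat_ne hyz, ← hWhdef]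
        have e1 : Wh x z = CKMMAux.WW w M (lcaSubtree T x z) := by
          rw [hWhdef, CKMMAux.What_ne hxz]
        have e2 : Wh y z = CKMMAux.WW w M (lcaSubtree T y z) := by
          rw [hWhdef, CKMMAux.What_ne hyz]
        have e3 : Wh x y = CKMMAux.WW w M (lcaSubtree T x y) := by
          rw [hWhdef, CKMMAux.What_ne hxy]
        rw [← e1, ← e2, ← e3] at h3
        rcases le_total (Wh x z) (Wh y z) with hc | hc
        · rw [min_eq_left hc] at h3
          exact le_max_of_le_left (by linarith)
        · rw [min_eq_right hc] at h3
          exact le_max_of_le_right (by linarith)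
    · intro a b _ hab
      rw [CKMMAux.fhat_def, CKMMAux.fhat_def]
      exact max_le_max (by linarith) le_rfl
    · intro a _
      exact le_max_right _ _
    · intro x y hxy
      exact (hfhat x y hxy).symm
    · intro u v u' v' huv hu'v' heq
      rw [hfhat u v huv, hfhat u' v' hu'v'] at heq
      rw [CKMMAux.dhat_ne huv, CKMMAux.dhat_ne hu'v', ← hWhdef, heq]
  -- T is a generating tree for Wh
  have hgen : IsGenerating Wh T := by
    refine ⟨CKMMAux.WW w M, fun s _ => hWh0 s, ?_, ?_⟩
    · intro L R hsubn s hs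
      have hnd : (ClusterTree.node L R).leavesList.Nodup :=
        CKMMAux.nodup_of_isSubtreeOf hsubn hndT
      have hsubleaves : s.leaves ⊆ (ClusterTree.node L R).leaves := by
        rcases hs with hs | hs
        · exact CKMMAux.leaves_subset_of_isSubtreeOf (CKMMAux.isSubtreeOf_node_left hs)
        · exact CKMMAux.leaves_subset_of_isSubtreeOf (CKMMAux.isSubtreeOf_node_right hs)
      exact CKMMAux.WW_le_WW hsubleaves (CKMMAux.WW_node_le_M hwM hnd)
    · intro x y _ _ hxy
      rw [hWhdef, CKMMAux.What_ne hxy]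
  have hminT : ∀ T'' : ClusterTree V, IsClusterTree T'' →
      treeCost Wh g T ≤ treeCost Wh g T'' :=
    (hadm V Wh hGF T hT).mpr hgen
  -- assemble
  have c1 : treeCost w g T ≤ δ * treeCost Wh g T := by
    have h := CKMMAux.treeCost_mono (w1 := w) (w2 := fun x y => δ * Wh x y) hg
      (fun x y hxy => hup x y hxy) T hndT
    rwa [CKMMAux.treeCost_smul] at h
  have c2 : treeCost Wh g T ≤ treeCost Wh g T' := hminT T' hT'
  have c3 : treeCost Wh g T' ≤ treeCost w g T' :=
    CKMMAux.treeCost_mono hg (fun x y hxy => hlow x y hxy) T' hT'.1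
  calc treeCost w g T ≤ δ * treeCost Wh g T := c1
    _ ≤ δ * treeCost Wh g T' := mul_le_mul_of_nonneg_left c2 hδ0.le
    _ ≤ δ * treeCost w g T' := mul_le_mul_of_nonneg_left c3 hδ0.le
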